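/- Let X be a finite nonempty alphabet and p a probability distribution on X. Then H*(p) = 0 if and only if there exists x ∈ X with p(x) = 1. -/

import Mathlib

/-!
Each summand `t * (1/2) * log₂ (4 tᵗ / (t+1)ᵗ⁺¹)` vanishes at `t = 0` and `t = 1` and is positive
in between: writing `a = t / (t+1)`, the logarithm equals `2 log 2 - (t+1) h(a)` with `h` the binary
entropy, and `h ≤ log 2` bounds it below by `(1 - t) log 2`. Hence `H*(p) ≥ 0`, with equality iff
every `p x` is `0` or `1`, which for a probability vector means a point mass.
-/

/-- Lin entropy of a distribution on a finite alphabet. -/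
noncomputable def linEntropy {X : Type*} [Fintype X] (p : X → ℝ) : ℝ :=
  ∑ x, p x * ((1 / 2) * Real.logb 2 (4 * p x ^ p x / (p x + 1) ^ (p x + 1)))

open Real

noncomputable def linEntropyTerm (t : ℝ) : ℝ :=
  t * ((1 / 2) * logb 2 (4 * t ^ t / (t + 1) ^ (t + 1)))

lemma log_four_mul_rpow_self_div_eq {t : ℝ} (ht : 0 < t) :
    log (4 * t ^ t / (t + 1) ^ (t + 1)) = 2 * log 2 - (t + 1) * binEntropy (t / (t + 1)) := by
  have ht1 : 0 < t + 1 := by linarith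
  have hcompl : 1 - t / (t + 1) = (t + 1)⁻¹ := by field_simp; ring
  rw [binEntropy, hcompl, inv_inv, inv_div, log_div ht1.ne' ht.ne', log_div (by positivity)
    (by positivity), log_mul four_ne_zero (by positivity), log_rpow ht, log_rpow ht1,
    show (4 : ℝ) = 2 ^ 2 by norm_num, log_pow]
  field_simp
  push_cast
  ring

lemma one_sub_mul_log_two_le_log_four_mul_rpow_self_div {t : ℝ} (ht : 0 < t) :
    (1 - t) * log 2 ≤ log (4 * t ^ t / (t + 1) ^ (t + 1)) := by
  rw [log_four_mul_rpow_self_div_eq ht]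
  nlinarith [binEntropy_le_log_two (p := t / (t + 1))]

lemma linEntropyTerm_pos {t : ℝ} (h0 : 0 < t) (h1 : t < 1) : 0 < linEntropyTerm t := by
  have hlog : 0 < log (4 * t ^ t / (t + 1) ^ (t + 1)) :=
    lt_of_lt_of_le (mul_pos (by linarith) (log_pos one_lt_two))
      (one_sub_mul_log_two_le_log_four_mul_rpow_self_div h0)
  have := div_pos hlog (log_pos one_lt_two)
  unfold linEntropyTerm logb
  positivity

lemma linEntropyTerm_zero : linEntropyTerm 0 = 0 := by
  simp [linEntropyTerm]

lemma linEntropyTerm_one : linEntropyTerm 1 = 0 := by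
  norm_num [linEntropyTerm]

lemma linEntropyTerm_eq_zero_iff {t : ℝ} (h0 : 0 ≤ t) (h1 : t ≤ 1) :
    linEntropyTerm t = 0 ↔ t = 0 ∨ t = 1 := by
  refine ⟨fun h => ?_, ?_⟩
  · by_contra! hne
    exact (linEntropyTerm_pos (h0.lt_of_ne' hne.1) (h1.lt_of_ne hne.2)).ne' h
  · rintro (rfl | rfl)
    exacts [linEntropyTerm_zero, linEntropyTerm_one]

lemma linEntropyTerm_nonneg {t : ℝ} (h0 : 0 ≤ t) (h1 : t ≤ 1) : 0 ≤ linEntropyTerm t := by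
  rcases h0.eq_or_lt with rfl | h0
  · exact linEntropyTerm_zero.ge
  rcases h1.eq_or_lt with rfl | h1
  · exact linEntropyTerm_one.ge
  · exact (linEntropyTerm_pos h0 h1).le

lemma forall_eq_zero_or_eq_one_iff_exists_eq_one {X : Type*} [Fintype X] {p : X → ℝ}
    (hp : ∀ x, 0 ≤ p x) (hsum : ∑ x, p x = 1) :
    (∀ x, p x = 0 ∨ p x = 1) ↔ ∃ x, p x = 1 := by
  classical
  refine ⟨fun h => ?_, fun ⟨x, hx⟩ y => ?_⟩
  · by_contra! hne
    simp [fun x => (h x).resolve_right (hne x)] at hsum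
  · by_cases hyx : y = x
    · exact .inr (hyx ▸ hx)
    have hrest : ∑ z ∈ Finset.univ.erase x, p z = 0 := by
      linarith [Finset.add_sum_erase Finset.univ p (Finset.mem_univ x)]
    exact .inl ((Finset.sum_eq_zero_iff_of_nonneg fun z _ => hp z).mp hrest y
      (Finset.mem_erase.mpr ⟨hyx, Finset.mem_univ y⟩))

theorem linEntropy_eq_zero_iff_general
    {X : Type*} [Fintype X] (p : X → ℝ)
    (hp : ∀ x, 0 ≤ p x) (hsum : ∑ x, p x = 1) :
    linEntropy p = 0 ↔ ∃ x, p x = 1 := by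
  have hle (x : X) : p x ≤ 1 :=
    hsum ▸ Finset.single_le_sum (fun y _ => hp y) (Finset.mem_univ x)
  change ∑ x, linEntropyTerm (p x) = 0 ↔ _
  rw [← forall_eq_zero_or_eq_one_iff_exists_eq_one hp hsum,
    Finset.sum_eq_zero_iff_of_nonneg fun x _ => linEntropyTerm_nonneg (hp x) (hle x)]
  simp only [Finset.mem_univ, true_implies, linEntropyTerm_eq_zero_iff (hp _) (hle _)]

/-- Minimality: the Lin entropy of a distribution `p` vanishes iff `p` is a point mass. -/
theorem linEntropy_eq_zero_iff
    {X : Type*} [Fintype X] [Nonempty X] (p : X → ℝ)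
    (hp : ∀ x, 0 ≤ p x) (hsum : ∑ x, p x = 1) :
    linEntropy p = 0 ↔ ∃ x, p x = 1 :=
  linEntropy_eq_zero_iff_general p hp hsum
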